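/- arXiv:math/0401248 — 2 statements merged into one kernel-verified Lean document; each statement's English description precedes it below -/
import Mathlib

section
/- For every f : ℕ^Λ → ℝ and every n = 1,2,…,N, ν_Λ^N[f | η̄_{Λ₁} = n] − ν_Λ^N[f | η̄_{Λ₁} = n−1] = (γ(n−1)/γ(n)) · (1/(nL)) · ( ν_Λ^N[ Σ_{x∈Λ₁, y∈Λ₂} h(η_x) c(η_y) ∂_{yx}f | η̄_{Λ₁} = n−1 ] + ν_Λ^N[ f , Σ_{x∈Λ₁, y∈Λ₂} h(η_x) c(η_y) | η̄_{Λ₁} = n−1 ] ), where h(n) := (n+1)/c(n+1). -/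
open scoped BigOperators

noncomputable section

/-- `cfact c k = c(k)! = c(1)⋯c(k)`, with `cfact c 0 = 1`. -/
def cfact (c : ℕ → ℝ) : ℕ → ℝ
  | 0 => 1
  | k + 1 => cfact c k * c (k + 1)

/-- The configuration obtained from `η` by moving one particle from `x` to `y` (`x ≠ y`),
i.e. `η - δ^x + δ^y`. -/
def move (η : ℤ → ℕ) (x y : ℤ) : ℤ → ℕ :=
  fun z => if z = x then η x - 1 else if z = y then η y + 1 else η z

/-- Unnormalized weight of the canonical measure `ν_Λ^N` on configurations supported in `Λ`
with `N` particles: `∏_{x∈Λ} 1/c(η_x)!`. -/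
def nuW (c : ℕ → ℝ) (Λ : Finset ℤ) (N : ℕ) : (ℤ → ℕ) → ℝ :=
  Set.indicator {η : ℤ → ℕ | (∀ x, x ∉ Λ → η x = 0) ∧ (∑ x ∈ Λ, η x) = N}
    (fun η => ∏ x ∈ Λ, (cfact c (η x))⁻¹)

/-- Expectation with respect to the probability measure obtained by normalizing the
nonnegative weight `w`. -/
def wE (w f : (ℤ → ℕ) → ℝ) : ℝ :=
  (∑' η : ℤ → ℕ, w η * f η) / (∑' η : ℤ → ℕ, w η)

/-- Covariance `μ[f,g] = μ[f g] - μ[f] μ[g]`. -/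
def wCov (w f g : (ℤ → ℕ) → ℝ) : ℝ :=
  wE w (fun η => f η * g η) - wE w f * wE w g

/-- Entropy `Ent_μ(f) = μ[f log f] - μ[f] log μ[f]` (note `Real.log 0 = 0`, giving the
convention `0 log 0 = 0`). -/
def wEnt (w f : (ℤ → ℕ) → ℝ) : ℝ :=
  wE w (fun η => f η * Real.log (f η)) - wE w f * Real.log (wE w f)

/-- Dirichlet form of the zero-range process on `Λ`:
`E(f,g) = (1/2) Σ_{x∈Λ} Σ_{y∈Λ, |x-y|=1} μ[c(η_x) ∂_{xy}f ∂_{xy}g]`. -/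
def wDir (c : ℕ → ℝ) (Λ : Finset ℤ) (w f g : (ℤ → ℕ) → ℝ) : ℝ :=
  wE w (fun η => (1 / 2) * ∑ x ∈ Λ, ∑ y ∈ Λ,
    if |x - y| = 1 then c (η x) * ((f (move η x y) - f η) * (g (move η x y) - g η)) else 0)

/-- Weight conditioned on the event `∑_{x ∈ Λ₁} η x = n`. -/
def condW (w : (ℤ → ℕ) → ℝ) (Λ₁ : Finset ℤ) (n : ℕ) : (ℤ → ℕ) → ℝ :=
  Set.indicator {η : ℤ → ℕ | (∑ x ∈ Λ₁, η x) = n} w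

/-- `h(n) = (n+1)/c(n+1)`. -/
def hfun (c : ℕ → ℝ) (n : ℕ) : ℝ := (n + 1) / c (n + 1)

/-- The segment `Λ₁ = [a, a+L) ∩ ℤ`. -/
def seg1 (a : ℤ) (L : ℕ) : Finset ℤ := Finset.Ico a (a + (L : ℤ))

/-- The adjacent segment `Λ₂ = [a+L, a+2L) ∩ ℤ`. -/
def seg2 (a : ℤ) (L : ℕ) : Finset ℤ := Finset.Ico (a + (L : ℤ)) (a + 2 * (L : ℤ))

/-- `Λ = Λ₁ ∪ Λ₂ = [a, a+2L) ∩ ℤ`. -/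
def segL (a : ℤ) (L : ℕ) : Finset ℤ := Finset.Ico a (a + 2 * (L : ℤ))

/-- `γ(n) = ν_Λ^N[η̄_{Λ₁} = n]`. -/
def gammaP (c : ℕ → ℝ) (a : ℤ) (L N : ℕ) (n : ℕ) : ℝ :=
  wE (nuW c (segL a L) N)
    (Set.indicator {η : ℤ → ℕ | (∑ x ∈ seg1 a L, η x) = n} (fun _ => (1 : ℝ)))

/-! Moving one particle from `y ∈ Λ₂` to `x ∈ Λ₁` maps `{η̄_{Λ₁} = n - 1, η_y ≥ 1}` bijectively
onto `{η̄_{Λ₁} = n, η_x ≥ 1}` and multiplies the weight `∏ 1/c(η_z)!` by `c(η_y) / c(η_x + 1)`.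
Hence `Σ_η 1{η̄_{Λ₁} = n} ν(η) η_x f(η)` equals
`Σ_ζ 1{ζ̄_{Λ₁} = n - 1} ν(ζ) h(ζ_x) c(ζ_y) f(ζ - δ^y + δ^x)`, the terms with `ζ_y = 0` vanishing
because `c 0 = 0`. Summing over `x ∈ Λ₁` and `y ∈ Λ₂` turns `Σ_x η_x` into `n` and gives
`n L γ(n) ν[f | n] = γ(n-1) ν[Σ h c f(η^{y→x}) | n-1]`. Writing `f(η^{y→x}) = ∂_{yx} f + f` and
using the case `f = 1` to express `γ(n) / γ(n-1)` produces the covariance term. -/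

section Move

variable {η : ℤ → ℕ} {x y z : ℤ}

lemma move_apply_left : move η x y x = η x - 1 := by simp [move]

lemma move_apply_right (hxy : x ≠ y) : move η x y y = η y + 1 := by
  simp [move, hxy.symm]

lemma move_apply_of_ne (hzx : z ≠ x) (hzy : z ≠ y) : move η x y z = η z := by
  simp [move, hzx, hzy]

lemma move_move (hxy : x ≠ y) (hx : 1 ≤ η x) : move (move η x y) y x = η := by
  funext z
  by_cases h1 : z = x <;> by_cases h2 : z = y <;> simp_all [move]

lemma sum_move_add (hxy : x ≠ y) (hx : 1 ≤ η x) (A : Finset ℤ) :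
    ∑ z ∈ A, move η x y z + (if x ∈ A then 1 else 0) = ∑ z ∈ A, η z + (if y ∈ A then 1 else 0) := by
  have hpt : ∀ z, move η x y z + (if z = x then 1 else 0) = η z + (if z = y then 1 else 0) := by
    intro z
    by_cases h1 : z = x <;> by_cases h2 : z = y <;> simp_all [move]
  rw [← Finset.sum_ite_eq' A x (fun _ => 1), ← Finset.sum_ite_eq' A y (fun _ => 1),
    ← Finset.sum_add_distrib, ← Finset.sum_add_distrib]
  exact Finset.sum_congr rfl fun z _ => hpt z

end Move

lemma cfact_pos {c : ℕ → ℝ} (hc : ∀ n, 0 < n → 0 < c n) (k : ℕ) : 0 < cfact c k := by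
  induction k with
  | zero => simp [cfact]
  | succ k ih => simpa [cfact] using mul_pos ih (hc (k + 1) k.succ_pos)

lemma prod_inv_cfact_move {c : ℕ → ℝ} (hc : ∀ n, 0 < n → 0 < c n) {Λ : Finset ℤ}
    {η : ℤ → ℕ} {x y : ℤ} (hx : x ∈ Λ) (hy : y ∈ Λ) (hxy : x ≠ y) (hηx : 1 ≤ η x) :
    ∏ z ∈ Λ, (cfact c (move η x y z))⁻¹ =
      (∏ z ∈ Λ, (cfact c (η z))⁻¹) * (c (η x) / c (η y + 1)) := by
  have hpt : ∀ z, (cfact c (move η x y z))⁻¹ = (cfact c (η z))⁻¹ *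
      ((if z = x then c (η x) else 1) * (if z = y then (c (η y + 1))⁻¹ else 1)) := by
    intro z
    by_cases hzx : z = x
    · subst hzx
      obtain ⟨k, hk⟩ : ∃ k, η z = k + 1 := ⟨η z - 1, by omega⟩
      have hck := (hc (k + 1) k.succ_pos).ne'
      simp [move_apply_left, hxy, hk, cfact]
      field_simp
    by_cases hzy : z = y
    · subst hzy
      simp [hzx, move_apply_right hxy, cfact, mul_comm]
    · simp [hzx, hzy, move_apply_of_ne hzx hzy]
  simp only [hpt, Finset.prod_mul_distrib, Finset.prod_ite_eq', hx, hy, if_true, div_eq_mul_inv]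

section Weights

variable {c : ℕ → ℝ} {Λ Λ₁ Λ₂ : Finset ℤ} {N : ℕ}

lemma nuW_nonneg (hc : ∀ n, 0 < n → 0 < c n) (η : ℤ → ℕ) : 0 ≤ nuW c Λ N η :=
  Set.indicator_nonneg (fun _ _ => Finset.prod_nonneg fun _ _ =>
    inv_nonneg.mpr (cfact_pos hc _).le) η

lemma nuW_eq_zero_of_notMem_piAntidiag {η : ℤ → ℕ} (hη : η ∉ Λ.piAntidiag N) :
    nuW c Λ N η = 0 := by
  refine Set.indicator_of_notMem ?_ _
  rintro ⟨hsupp, hsum⟩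
  exact hη <| Finset.mem_piAntidiag.mpr ⟨hsum, fun z hz => by_contra fun h => hz (hsupp z h)⟩

lemma summable_of_nuW_eq_zero {F : (ℤ → ℕ) → ℝ} (hF : ∀ η, nuW c Λ N η = 0 → F η = 0) :
    Summable F :=
  summable_of_ne_finset_zero fun _ hη => hF _ (nuW_eq_zero_of_notMem_piAntidiag hη)

lemma nuW_move (hc : ∀ n, 0 < n → 0 < c n) {η : ℤ → ℕ} {x y : ℤ} (hx : x ∈ Λ) (hy : y ∈ Λ)
    (hxy : x ≠ y) (hηx : 1 ≤ η x) :
    nuW c Λ N (move η x y) = nuW c Λ N η * (c (η x) / c (η y + 1)) := by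
  have hsupp : (∀ z, z ∉ Λ → move η x y z = 0) ↔ ∀ z, z ∉ Λ → η z = 0 := by
    refine forall₂_congr fun z hz => ?_
    rw [move_apply_of_ne (ne_of_mem_of_not_mem hx hz).symm (ne_of_mem_of_not_mem hy hz).symm]
  have hsum : ∑ z ∈ Λ, move η x y z = ∑ z ∈ Λ, η z := by
    simpa [hx, hy] using sum_move_add hxy hηx Λ
  classical
  simp only [nuW, Set.indicator_apply, Set.mem_ofPred_eq, hsupp, hsum]
  split_ifs
  · exact prod_inv_cfact_move hc hx hy hxy hηx
  · simp

lemma condW_eq_zero_of_eq_zero {w : (ℤ → ℕ) → ℝ} {k : ℕ} {η : ℤ → ℕ} (h : w η = 0) :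
    condW w Λ₁ k η = 0 := by
  simp [condW, Set.indicator_apply, h]

lemma condW_nuW_move_mul (hc : ∀ n, 0 < n → 0 < c n) (hdisj : Disjoint Λ₁ Λ₂) {m : ℕ}
    {ζ : ℤ → ℕ} {x y : ℤ} (hx : x ∈ Λ₁) (hy : y ∈ Λ₂) (hζy : 1 ≤ ζ y) :
    condW (nuW c (Λ₁ ∪ Λ₂) N) Λ₁ (m + 1) (move ζ y x) * (move ζ y x x : ℝ) =
      condW (nuW c (Λ₁ ∪ Λ₂) N) Λ₁ m ζ * (hfun c (ζ x) * c (ζ y)) := by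
  have hyx : y ≠ x := ne_of_mem_of_not_mem hy (Finset.disjoint_left.mp hdisj hx)
  have hy₁ : y ∉ Λ₁ := Finset.disjoint_right.mp hdisj hy
  have hsum : ∑ z ∈ Λ₁, move ζ y x z = ∑ z ∈ Λ₁, ζ z + 1 := by
    simpa [hx, hy₁] using sum_move_add hyx hζy Λ₁
  have hcx := (hc (ζ x + 1) (ζ x).succ_pos).ne'
  classical
  simp only [condW, Set.indicator_apply, Set.mem_ofPred_eq, hsum, add_left_inj,
    nuW_move hc (Finset.mem_union_right _ hy) (Finset.mem_union_left _ hx) hyx hζy,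
    move_apply_right hyx, hfun]
  split_ifs
  · push_cast
    field_simp
  · simp

end Weights

lemma tsum_eq_tsum_of_move {α : Type*} [AddCommMonoid α] [TopologicalSpace α]
    {F G : (ℤ → ℕ) → α} {x y : ℤ} (hxy : x ≠ y) (hF : ∀ η, η x = 0 → F η = 0)
    (hG : ∀ ζ, ζ y = 0 → G ζ = 0) (hFG : ∀ ζ, 1 ≤ ζ y → F (move ζ y x) = G ζ) :
    ∑' η, F η = ∑' ζ, G ζ := by
  have hpos : ∀ ζ : Function.support G, 1 ≤ ζ.1 y :=
    fun ζ => Nat.one_le_iff_ne_zero.mpr fun h => ζ.2 (hG _ h)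
  refine tsum_eq_tsum_of_ne_zero_bij (fun ζ => move ζ.1 y x) (fun ζ₁ ζ₂ h => ?_) ?_
    (fun ζ => hFG _ (hpos ζ))
  · rw [Subtype.ext_iff, ← move_move hxy.symm (hpos ζ₁), ← move_move hxy.symm (hpos ζ₂)]
    exact congrArg (move · x y) h
  · intro η hη
    have hηx : 1 ≤ η x := Nat.one_le_iff_ne_zero.mpr fun h => hη (hF _ h)
    refine ⟨⟨move η x y, ?_⟩, move_move hxy hηx⟩
    rw [Function.mem_support, ← hFG _ (by rw [move_apply_right hxy]; omega), move_move hxy hηx]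
    exact hη

section Gradient

variable {c : ℕ → ℝ} {Λ₁ Λ₂ : Finset ℤ} {N m : ℕ}

lemma summable_condW_mul (k : ℕ) (g : (ℤ → ℕ) → ℝ) :
    Summable fun η => condW (nuW c (Λ₁ ∪ Λ₂) N) Λ₁ k η * g η :=
  summable_of_nuW_eq_zero fun _ h => by rw [condW_eq_zero_of_eq_zero h, zero_mul]

lemma natCast_mul_card_mul_tsum_condW_succ (hc0 : c 0 = 0) (hc : ∀ n, 0 < n → 0 < c n)
    (hdisj : Disjoint Λ₁ Λ₂) (f : (ℤ → ℕ) → ℝ) :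
    ((m + 1 : ℕ) : ℝ) * (Λ₂.card : ℝ) * ∑' η, condW (nuW c (Λ₁ ∪ Λ₂) N) Λ₁ (m + 1) η * f η =
      ∑' ζ, condW (nuW c (Λ₁ ∪ Λ₂) N) Λ₁ m ζ *
        ∑ x ∈ Λ₁, ∑ y ∈ Λ₂, hfun c (ζ x) * c (ζ y) * f (move ζ y x) := by
  set w := condW (nuW c (Λ₁ ∪ Λ₂) N) Λ₁
  have hlevel : ∀ η, ((m + 1 : ℕ) : ℝ) * (Λ₂.card : ℝ) * (w (m + 1) η * f η) =
      ∑ x ∈ Λ₁, ∑ _y ∈ Λ₂, w (m + 1) η * η x * f η := by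
    intro η
    by_cases hη : ∑ z ∈ Λ₁, η z = m + 1
    · simp only [Finset.sum_const, nsmul_eq_mul, ← Finset.sum_mul, ← Finset.mul_sum,
        ← Nat.cast_sum, hη]
      ring
    · simp [w, condW, hη]
  have hsumm : ∀ x, Summable fun η => w (m + 1) η * η x * f η := fun x => by
    simpa only [mul_assoc] using summable_condW_mul (m + 1) fun η => η x * f η
  calc ((m + 1 : ℕ) : ℝ) * (Λ₂.card : ℝ) * ∑' η, w (m + 1) η * f η
      = ∑ x ∈ Λ₁, ∑ y ∈ Λ₂, ∑' η, w (m + 1) η * η x * f η := by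
        rw [← tsum_mul_left, tsum_congr hlevel, Summable.tsum_finsetSum]
        · exact Finset.sum_congr rfl fun x _ => Summable.tsum_finsetSum fun _ _ => hsumm x
        · exact fun x _ => summable_sum fun _ _ => hsumm x
    _ = ∑ x ∈ Λ₁, ∑ y ∈ Λ₂, ∑' ζ, w m ζ * (hfun c (ζ x) * c (ζ y) * f (move ζ y x)) := by
        refine Finset.sum_congr rfl fun x hx => Finset.sum_congr rfl fun y hy => ?_
        refine tsum_eq_tsum_of_move (ne_of_mem_of_not_mem hx (Finset.disjoint_right.mp hdisj hy))
          (fun η h => by simp [h]) (fun ζ h => by simp [h, hc0]) fun ζ hζ => ?_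
        rw [condW_nuW_move_mul hc hdisj hx hy hζ]
        ring
    _ = ∑' ζ, w m ζ * ∑ x ∈ Λ₁, ∑ y ∈ Λ₂, hfun c (ζ x) * c (ζ y) * f (move ζ y x) := by
        simp only [Finset.mul_sum]
        rw [Summable.tsum_finsetSum]
        · exact Finset.sum_congr rfl fun x _ =>
            (Summable.tsum_finsetSum fun y _ => summable_condW_mul m _).symm
        · exact fun x _ => summable_sum fun y _ => summable_condW_mul m _

end Gradient

section Positivity

variable {c : ℕ → ℝ} {Λ₁ Λ₂ : Finset ℤ} {N k : ℕ} {x y : ℤ}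

lemma exists_condW_nuW_pos (hc : ∀ n, 0 < n → 0 < c n) (hdisj : Disjoint Λ₁ Λ₂) (hx : x ∈ Λ₁)
    (hy : y ∈ Λ₂) (hk : k ≤ N) : ∃ η, 0 < condW (nuW c (Λ₁ ∪ Λ₂) N) Λ₁ k η := by
  classical
  have hy₁ : y ∉ Λ₁ := Finset.disjoint_right.mp hdisj hy
  refine ⟨Pi.single x k + Pi.single y (N - k), ?_⟩
  have hmem : Pi.single x k + Pi.single y (N - k) ∈
      {η : ℤ → ℕ | (∀ z, z ∉ Λ₁ ∪ Λ₂ → η z = 0) ∧ ∑ z ∈ Λ₁ ∪ Λ₂, η z = N} := by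
    refine ⟨fun z hz => ?_, ?_⟩
    · simp [ne_of_mem_of_not_mem (Finset.mem_union_left _ hx) hz |>.symm,
        ne_of_mem_of_not_mem (Finset.mem_union_right _ hy) hz |>.symm]
    simp only [Pi.add_apply, Finset.sum_add_distrib, Finset.sum_pi_single', Finset.mem_union,
      hx, hy, true_or, or_true, if_true]
    omega
  rw [condW, nuW, Set.indicator_of_mem (by simp [Finset.sum_add_distrib, hx, hy₁]),
    Set.indicator_of_mem hmem]
  exact Finset.prod_pos fun z _ => inv_pos.mpr (cfact_pos hc _)

lemma tsum_condW_nuW_pos (hc : ∀ n, 0 < n → 0 < c n) (hdisj : Disjoint Λ₁ Λ₂) (hx : x ∈ Λ₁)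
    (hy : y ∈ Λ₂) (hk : k ≤ N) : 0 < ∑' η, condW (nuW c (Λ₁ ∪ Λ₂) N) Λ₁ k η := by
  obtain ⟨η, hη⟩ := exists_condW_nuW_pos hc hdisj hx hy hk
  exact (summable_of_nuW_eq_zero fun _ => condW_eq_zero_of_eq_zero).tsum_pos
    (fun _ => Set.indicator_nonneg (fun _ _ => nuW_nonneg hc _) _) η hη

lemma tsum_nuW_pos (hc : ∀ n, 0 < n → 0 < c n) (hdisj : Disjoint Λ₁ Λ₂) (hx : x ∈ Λ₁)
    (hy : y ∈ Λ₂) : 0 < ∑' η, nuW c (Λ₁ ∪ Λ₂) N η := by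
  obtain ⟨η, hη⟩ := exists_condW_nuW_pos (k := N) hc hdisj hx hy le_rfl
  exact (summable_of_nuW_eq_zero fun _ => id).tsum_pos (nuW_nonneg hc) η
    (hη.trans_le (Set.indicator_le_self' (fun _ _ => nuW_nonneg hc _) η))

end Positivity

theorem wE_condW_succ_sub_wE_condW {c : ℕ → ℝ} {Λ₁ Λ₂ : Finset ℤ} {N m : ℕ} {x₀ y₀ : ℤ}
    (hc0 : c 0 = 0) (hc : ∀ n, 0 < n → 0 < c n) (hdisj : Disjoint Λ₁ Λ₂) (hx₀ : x₀ ∈ Λ₁)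
    (hy₀ : y₀ ∈ Λ₂) (hmN : m + 1 ≤ N) (f : (ℤ → ℕ) → ℝ) :
    wE (condW (nuW c (Λ₁ ∪ Λ₂) N) Λ₁ (m + 1)) f - wE (condW (nuW c (Λ₁ ∪ Λ₂) N) Λ₁ m) f =
      (∑' η, condW (nuW c (Λ₁ ∪ Λ₂) N) Λ₁ m η) /
          (∑' η, condW (nuW c (Λ₁ ∪ Λ₂) N) Λ₁ (m + 1) η) *
        (1 / (((m + 1 : ℕ) : ℝ) * (Λ₂.card : ℝ))) *
        (wE (condW (nuW c (Λ₁ ∪ Λ₂) N) Λ₁ m)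
            (fun η => ∑ x ∈ Λ₁, ∑ y ∈ Λ₂, hfun c (η x) * c (η y) * (f (move η y x) - f η))
          + wCov (condW (nuW c (Λ₁ ∪ Λ₂) N) Λ₁ m) f
              (fun η => ∑ x ∈ Λ₁, ∑ y ∈ Λ₂, hfun c (η x) * c (η y))) := by
  have hf := natCast_mul_card_mul_tsum_condW_succ (N := N) (m := m) hc0 hc hdisj f
  have h1 := natCast_mul_card_mul_tsum_condW_succ (N := N) (m := m) hc0 hc hdisj fun _ => 1
  simp only [mul_one] at h1
  have hZm := (tsum_condW_nuW_pos (N := N) hc hdisj hx₀ hy₀ (k := m) (by omega)).ne'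
  have hZn := (tsum_condW_nuW_pos hc hdisj hx₀ hy₀ hmN).ne'
  have hcard : (Λ₂.card : ℝ) ≠ 0 := Nat.cast_ne_zero.mpr (Finset.card_ne_zero_of_mem hy₀)
  set w := condW (nuW c (Λ₁ ∪ Λ₂) N) Λ₁
  have hsplit : ∑' ζ, w m ζ *
        ∑ x ∈ Λ₁, ∑ y ∈ Λ₂, hfun c (ζ x) * c (ζ y) * (f (move ζ y x) - f ζ) =
      ∑' ζ, w m ζ * ∑ x ∈ Λ₁, ∑ y ∈ Λ₂, hfun c (ζ x) * c (ζ y) * f (move ζ y x) -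
        ∑' ζ, w m ζ * (f ζ * ∑ x ∈ Λ₁, ∑ y ∈ Λ₂, hfun c (ζ x) * c (ζ y)) := by
    rw [← (summable_condW_mul m _).tsum_sub (summable_condW_mul m _)]
    refine tsum_congr fun ζ => ?_
    simp only [Finset.mul_sum, ← Finset.sum_sub_distrib]
    exact Finset.sum_congr rfl fun _ _ => Finset.sum_congr rfl fun _ _ => by ring
  simp only [wE, wCov, hsplit]
  field_simp
  linear_combination (∑' η, w m η) * hf - (∑' η, w m η * f η) * h1

lemma seg1_union_seg2 (a : ℤ) (L : ℕ) : seg1 a L ∪ seg2 a L = segL a L :=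
  Finset.Ico_union_Ico_eq_Ico (by omega) (by omega)

lemma disjoint_seg1_seg2 (a : ℤ) (L : ℕ) : Disjoint (seg1 a L) (seg2 a L) :=
  Finset.Ico_disjoint_Ico_consecutive _ _ _

lemma card_seg2 (a : ℤ) (L : ℕ) : (seg2 a L).card = L := by
  simp only [seg2, Int.card_Ico]
  omega

lemma gammaP_eq_tsum_div (c : ℕ → ℝ) (a : ℤ) (L N k : ℕ) :
    gammaP c a L N k = (∑' η, condW (nuW c (segL a L) N) (seg1 a L) k η) /
      ∑' η, nuW c (segL a L) N η := by
  classical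
  simp only [gammaP, wE, condW, Set.indicator_apply, Set.mem_ofPred_eq, mul_ite, mul_one,
    mul_zero]

theorem statement3_general
    (c : ℕ → ℝ)
    (hc0 : c 0 = 0) (hcpos : ∀ n : ℕ, 0 < n → 0 < c n)
    (a : ℤ) (L N : ℕ) (hL : 1 ≤ L)
    (f : (ℤ → ℕ) → ℝ) (n : ℕ) (hn1 : 1 ≤ n) (hnN : n ≤ N) :
    wE (condW (nuW c (segL a L) N) (seg1 a L) n) f -
      wE (condW (nuW c (segL a L) N) (seg1 a L) (n - 1)) f =
    (gammaP c a L N (n - 1) / gammaP c a L N n) * (1 / ((n : ℝ) * (L : ℝ))) *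
      (wE (condW (nuW c (segL a L) N) (seg1 a L) (n - 1))
          (fun η => ∑ x ∈ seg1 a L, ∑ y ∈ seg2 a L,
            hfun c (η x) * c (η y) * (f (move η y x) - f η))
        + wCov (condW (nuW c (segL a L) N) (seg1 a L) (n - 1)) f
            (fun η => ∑ x ∈ seg1 a L, ∑ y ∈ seg2 a L, hfun c (η x) * c (η y))) := by
  obtain ⟨m, rfl⟩ : ∃ m, n = m + 1 := ⟨n - 1, by omega⟩
  have hx : a ∈ seg1 a L := Finset.mem_Ico.mpr ⟨le_rfl, by omega⟩
  have hy : a + L ∈ seg2 a L := Finset.mem_Ico.mpr ⟨le_rfl, by omega⟩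
  have hZ := (tsum_nuW_pos (N := N) hcpos (disjoint_seg1_seg2 a L) hx hy).ne'
  have hgrad :=
    wE_condW_succ_sub_wE_condW hc0 hcpos (disjoint_seg1_seg2 a L) hx hy hnN f
  rw [seg1_union_seg2] at hZ hgrad
  rw [card_seg2] at hgrad
  rw [Nat.add_sub_cancel, hgrad, gammaP_eq_tsum_div, gammaP_eq_tsum_div,
    div_div_div_cancel_right₀ hZ]

/-- Proposition 3.3: representation of the discrete gradient
`ν_Λ^N[f | η̄_{Λ₁}=n] - ν_Λ^N[f | η̄_{Λ₁}=n-1]`. -/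
theorem statement3
    (c : ℕ → ℝ) (a₁ a₂ : ℝ) (k₀ : ℕ)
    (hc0 : c 0 = 0) (hcpos : ∀ n : ℕ, 0 < n → 0 < c n)
    (hLG : ∀ k : ℕ, |c (k + 1) - c k| ≤ a₁)
    (hk₀ : 0 < k₀) (ha₂ : 0 < a₂)
    (hM : ∀ j k : ℕ, j + k₀ ≤ k → a₂ ≤ c k - c j)
    (a : ℤ) (L N : ℕ) (hL : 1 ≤ L) (hN : 1 ≤ N)
    (f : (ℤ → ℕ) → ℝ) (n : ℕ) (hn1 : 1 ≤ n) (hnN : n ≤ N) :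
    wE (condW (nuW c (segL a L) N) (seg1 a L) n) f -
      wE (condW (nuW c (segL a L) N) (seg1 a L) (n - 1)) f =
    (gammaP c a L N (n - 1) / gammaP c a L N n) * (1 / ((n : ℝ) * (L : ℝ))) *
      (wE (condW (nuW c (segL a L) N) (seg1 a L) (n - 1))
          (fun η => ∑ x ∈ seg1 a L, ∑ y ∈ seg2 a L,
            hfun c (η x) * c (η y) * (f (move η y x) - f η))
        + wCov (condW (nuW c (segL a L) N) (seg1 a L) (n - 1)) f
            (fun η => ∑ x ∈ seg1 a L, ∑ y ∈ seg2 a L, hfun c (η x) * c (η y))) :=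
  statement3_general c hc0 hcpos a L N hL f n hn1 hnN
end
end

section
/- Let X ≥ 0 be a real random variable and g : [0,∞) → [0,∞) a function such that E(e^{tX}) ≤ e^{t g(t) E(X)} for all t ≥ 0. Then, for all t ≥ 0, E(e^{t√X}) ≤ exp( t √(2g(2t) + g(t)) · √(E(X)) ) + e^{t}. -/
/-!
Split at the level `c = (2 g(2t) + g(t)) E X`. Where `X ≤ c`, simply `e^{t√X} ≤ e^{t√c}`. Where
`X > c`, the bounds `√X ≤ (X + 1)/2` and `X - c > 0` give `e^{t√X} ≤ e^{t/2 - 3tc/2} e^{2tX}`, and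
the moment generating function bound at `2t` makes the expectation of the right-hand side at
most `e^{t/2 - t g(2t) E X - 3t g(t) E X / 2} ≤ e^t`.
-/

open MeasureTheory Real

theorem Real.sqrt_le_add_one_div_two {x : ℝ} (hx : 0 ≤ x) : √x ≤ (x + 1) / 2 := by
  nlinarith [sq_sqrt hx, sq_nonneg (√x - 1)]

theorem Real.exp_mul_sqrt_le_add {t x : ℝ} (ht : 0 ≤ t) (hx : 0 ≤ x) (c : ℝ) :
    exp (t * √x) ≤ exp (t * √c) + exp (t / 2 - 3 * t / 2 * c) * exp (2 * t * x) := by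
  rcases le_or_gt x c with hxc | hcx
  · have hle : exp (t * √x) ≤ exp (t * √c) :=
      exp_le_exp.2 (mul_le_mul_of_nonneg_left (sqrt_le_sqrt hxc) ht)
    linarith [mul_pos (exp_pos (t / 2 - 3 * t / 2 * c)) (exp_pos (2 * t * x))]
  · have hsqrt : t * √x ≤ t * ((x + 1) / 2) :=
      mul_le_mul_of_nonneg_left (sqrt_le_add_one_div_two hx) ht
    have hle : exp (t * √x) ≤ exp (t / 2 - 3 * t / 2 * c) * exp (2 * t * x) := by
      rw [← exp_add]
      exact exp_le_exp.2 (by nlinarith [mul_le_mul_of_nonneg_left hcx.le ht])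
    linarith [exp_pos (t * √c)]

section

variable {Ω : Type*} [MeasurableSpace Ω] {μ : Measure Ω} [IsProbabilityMeasure μ] {X : Ω → ℝ}

theorem integral_exp_mul_sqrt_le (hX0 : ∀ ω, 0 ≤ X ω) (hX : AEStronglyMeasurable X μ)
    {t : ℝ} (ht : 0 ≤ t) (hint : Integrable (fun ω => exp (2 * t * X ω)) μ) (c : ℝ) :
    ∫ ω, exp (t * √(X ω)) ∂μ ≤
      exp (t * √c) + exp (t / 2 - 3 * t / 2 * c) * ∫ ω, exp (2 * t * X ω) ∂μ := by
  have hbound : ∀ ω, exp (t * √(X ω)) ≤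
      exp (t * √c) + exp (t / 2 - 3 * t / 2 * c) * exp (2 * t * X ω) :=
    fun ω => exp_mul_sqrt_le_add ht (hX0 ω) c
  have hint_bound := (integrable_const (exp (t * √c))).add
    (hint.const_mul (exp (t / 2 - 3 * t / 2 * c)))
  have hmeas : AEStronglyMeasurable (fun ω => exp (t * √(X ω))) μ :=
    (continuous_exp.comp (continuous_const.mul continuous_sqrt)).comp_aestronglyMeasurable hX
  have hint_lhs : Integrable (fun ω => exp (t * √(X ω))) μ :=
    hint_bound.mono' hmeas (.of_forall fun ω => by
      rw [norm_of_nonneg (exp_pos _).le]; exact hbound ω)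
  calc ∫ ω, exp (t * √(X ω)) ∂μ
      ≤ ∫ ω, (exp (t * √c) + exp (t / 2 - 3 * t / 2 * c) * exp (2 * t * X ω)) ∂μ :=
        integral_mono hint_lhs hint_bound hbound
    _ = exp (t * √c) + exp (t / 2 - 3 * t / 2 * c) * ∫ ω, exp (2 * t * X ω) ∂μ := by
        rw [integral_add (integrable_const _) (hint.const_mul _), integral_const,
          integral_const_mul, probReal_univ, one_smul]

end

/-- Lemma 4.3: if `E(e^{tX}) ≤ e^{t g(t) E(X)}` for all `t ≥ 0`, then
`E(e^{t√X}) ≤ exp(t √(2g(2t)+g(t)) √(E X)) + e^t` for all `t ≥ 0`. -/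
theorem statement17 {Ω : Type*} [MeasurableSpace Ω] (μ : Measure Ω) [IsProbabilityMeasure μ]
    (X : Ω → ℝ) (hX0 : ∀ ω, 0 ≤ X ω) (hXint : Integrable X μ)
    (g : ℝ → ℝ) (hg : ∀ t : ℝ, 0 ≤ t → 0 ≤ g t)
    (hexpint : ∀ t : ℝ, 0 ≤ t → Integrable (fun ω => Real.exp (t * X ω)) μ)
    (hmgf : ∀ t : ℝ, 0 ≤ t →
      (∫ ω, Real.exp (t * X ω) ∂μ) ≤ Real.exp (t * g t * ∫ ω, X ω ∂μ)) :
    ∀ t : ℝ, 0 ≤ t →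
      (∫ ω, Real.exp (t * Real.sqrt (X ω)) ∂μ) ≤
        Real.exp (t * Real.sqrt (2 * g (2 * t) + g t) * Real.sqrt (∫ ω, X ω ∂μ)) +
          Real.exp t := by
  intro t ht
  set m := ∫ ω, X ω ∂μ
  have hm : 0 ≤ m := integral_nonneg hX0
  have hgt : 0 ≤ g t := hg t ht
  have hg2t : 0 ≤ g (2 * t) := hg (2 * t) (by linarith)
  have hsplit := integral_exp_mul_sqrt_le hX0 hXint.1 ht (hexpint (2 * t) (by linarith))
    ((2 * g (2 * t) + g t) * m)
  have htail : exp (t / 2 - 3 * t / 2 * ((2 * g (2 * t) + g t) * m)) *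
      ∫ ω, exp (2 * t * X ω) ∂μ ≤ exp t := by
    calc exp (t / 2 - 3 * t / 2 * ((2 * g (2 * t) + g t) * m)) * ∫ ω, exp (2 * t * X ω) ∂μ
        ≤ exp (t / 2 - 3 * t / 2 * ((2 * g (2 * t) + g t) * m)) * exp (2 * t * g (2 * t) * m) :=
          mul_le_mul_of_nonneg_left (hmgf (2 * t) (by linarith)) (exp_pos _).le
      _ ≤ exp t := by
          rw [← exp_add]
          apply exp_le_exp.2
          nlinarith [mul_nonneg (mul_nonneg ht hg2t) hm, mul_nonneg (mul_nonneg ht hgt) hm]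
  rw [sqrt_mul (by positivity), ← mul_assoc] at hsplit
  linarith
end
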